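/- arXiv:2505.05529 — 3 statements merged into one kernel-verified Lean document; each statement's English description precedes it below -/
import Mathlib

section
/- The 3-dimensional pair with • given by e₁•e₃ = e₁, e₂•e₃ = e₂, e₃•e₁ = e₁, e₃•e₂ = e₂, e₃•e₃ = e₃ and * given by e₁*e₁ = e₂, e₁*e₃ = e₁, e₂*e₃ = e₂, e₃*e₁ = e₁, e₃*e₂ = e₂, e₃*e₃ = e₃ (all other products zero) is a compatible associative algebra. -/
/-- `e₁•e₃ = e₁`, `e₂•e₃ = e₂`, `e₃•e₁ = e₁`, `e₃•e₂ = e₂`, `e₃•e₃ = e₃`. -/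
def bul3 (x y : Fin 3 → ℂ) : Fin 3 → ℂ :=
  ![x 0 * y 2 + x 2 * y 0, x 1 * y 2 + x 2 * y 1, x 2 * y 2]

/-- Same as `bul3` together with `e₁*e₁ = e₂`. -/
def star3 (x y : Fin 3 → ℂ) : Fin 3 → ℂ :=
  ![x 0 * y 2 + x 2 * y 0, x 0 * y 0 + x 1 * y 2 + x 2 * y 1, x 2 * y 2]

theorem pair_A310_A312_compatible :
    (∀ a b c : Fin 3 → ℂ, bul3 (bul3 a b) c = bul3 a (bul3 b c)) ∧
    (∀ a b c : Fin 3 → ℂ, star3 (star3 a b) c = star3 a (star3 b c)) ∧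
    (∀ a b c : Fin 3 → ℂ, star3 (bul3 a b) c + bul3 (star3 a b) c
        = bul3 a (star3 b c) + star3 a (bul3 b c)) := by
  refine ⟨?_, ?_, ?_⟩ <;> intro a b c <;> funext i <;>
    fin_cases i <;> simp [bul3, star3] <;> ring
end

section
/- For the 3-dimensional compatible associative algebra (A₃¹⁰, A₃¹²) with e₁•e₃ = e₁, e₂•e₃ = e₂, e₃•e₁ = e₁, e₃•e₂ = e₂, e₃•e₃ = e₃ and e₁*e₁ = e₂, e₁*e₃ = e₁, e₂*e₃ = e₂, e₃*e₁ = e₁, e₃*e₂ = e₂, e₃*e₃ = e₃, a linear map d is a derivation of the compatible pair if and only if d(e₃) = 0, d(e₁) = a·e₁ + b·e₂ and d(e₂) = 2a·e₂ for some a, b ∈ ℂ. -/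
lemma bul3_0 (x y : Fin 3 → ℂ) : bul3 x y 0 = x 0 * y 2 + x 2 * y 0 := rfl
lemma bul3_1 (x y : Fin 3 → ℂ) : bul3 x y 1 = x 1 * y 2 + x 2 * y 1 := rfl
lemma bul3_2 (x y : Fin 3 → ℂ) : bul3 x y 2 = x 2 * y 2 := rfl
lemma star3_0 (x y : Fin 3 → ℂ) : star3 x y 0 = x 0 * y 2 + x 2 * y 0 := rfl
lemma star3_1 (x y : Fin 3 → ℂ) : star3 x y 1 = x 0 * y 0 + x 1 * y 2 + x 2 * y 1 := rfl
lemma star3_2 (x y : Fin 3 → ℂ) : star3 x y 2 = x 2 * y 2 := rfl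

lemma s00 : (Pi.single 0 1 : Fin 3 → ℂ) 0 = 1 := by simp
lemma s01 : (Pi.single 0 1 : Fin 3 → ℂ) 1 = 0 := by simp
lemma s02 : (Pi.single 0 1 : Fin 3 → ℂ) 2 = 0 := by simp
lemma s10 : (Pi.single 1 1 : Fin 3 → ℂ) 0 = 0 := by simp
lemma s11 : (Pi.single 1 1 : Fin 3 → ℂ) 1 = 1 := by simp
lemma s12 : (Pi.single 1 1 : Fin 3 → ℂ) 2 = 0 := by simp
lemma s20 : (Pi.single 2 1 : Fin 3 → ℂ) 0 = 0 := by simp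
lemma s21 : (Pi.single 2 1 : Fin 3 → ℂ) 1 = 0 := by simp
lemma s22 : (Pi.single 2 1 : Fin 3 → ℂ) 2 = 1 := by simp

lemma vec_ext {u v : Fin 3 → ℂ} (h0 : u 0 = v 0) (h1 : u 1 = v 1) (h2 : u 2 = v 2) :
    u = v := by
  funext j; fin_cases j <;> assumption

lemma hb22 : bul3 (Pi.single 2 1) (Pi.single 2 1) = (Pi.single 2 1 : Fin 3 → ℂ) := by
  funext i
  fin_cases i <;>
    simp [bul3_0, bul3_1, bul3_2, s20, s21, s22]
lemma hb00 : bul3 (Pi.single 0 1) (Pi.single 0 1) = (0 : Fin 3 → ℂ) := by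
  funext i
  fin_cases i <;>
    simp [bul3_0, bul3_1, bul3_2, s00, s01, s02]
lemma hs00 : star3 (Pi.single 0 1) (Pi.single 0 1) = (Pi.single 1 1 : Fin 3 → ℂ) := by
  funext i
  fin_cases i <;>
    simp [star3_0, star3_1, star3_2, s00, s01, s02, s10, s11, s12]

/-- Derivations of the compatible pair `(𝒜₃¹⁰, 𝒜₃¹²)`. -/
theorem der_A310_A312 (d : (Fin 3 → ℂ) →ₗ[ℂ] (Fin 3 → ℂ)) :
    ((∀ a b : Fin 3 → ℂ, d (bul3 a b) = bul3 (d a) b + bul3 a (d b)) ∧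
     (∀ a b : Fin 3 → ℂ, d (star3 a b) = star3 (d a) b + star3 a (d b))) ↔
    ∃ a b : ℂ, d (Pi.single 2 1 : Fin 3 → ℂ) = 0 ∧
      d (Pi.single 0 1 : Fin 3 → ℂ)
        = a • (Pi.single 0 1 : Fin 3 → ℂ) + b • (Pi.single 1 1 : Fin 3 → ℂ) ∧
      d (Pi.single 1 1 : Fin 3 → ℂ) = (2 * a) • (Pi.single 1 1 : Fin 3 → ℂ) := by
  constructor
  · rintro ⟨h1, h2⟩
    have H2 := h1 (Pi.single 2 1) (Pi.single 2 1)
    rw [hb22] at H2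
    have H0 := h1 (Pi.single 0 1) (Pi.single 0 1)
    rw [hb00, map_zero] at H0
    have H3 := h2 (Pi.single 0 1) (Pi.single 0 1)
    rw [hs00] at H3
    -- scalar consequences
    have r0 : d (Pi.single 2 1) 0 = 0 := by
      have t := congrFun H2 (0 : Fin 3)
      simp only [Pi.add_apply, bul3_0, s20, s22] at t
      linear_combination -t
    have r1 : d (Pi.single 2 1) 1 = 0 := by
      have t := congrFun H2 (1 : Fin 3)
      simp only [Pi.add_apply, bul3_1, s21, s22] at t
      linear_combination -t
    have r2 : d (Pi.single 2 1) 2 = 0 := by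
      have t := congrFun H2 (2 : Fin 3)
      simp only [Pi.add_apply, bul3_2, s22] at t
      linear_combination -t
    have p2 : d (Pi.single 0 1) 2 = 0 := by
      have t := congrFun H0 (0 : Fin 3)
      simp only [Pi.add_apply, Pi.zero_apply, bul3_0, s00, s02] at t
      linear_combination (-t) / 2
    have q0 : d (Pi.single 1 1) 0 = 2 * d (Pi.single 0 1) 2 := by
      have t := congrFun H3 (0 : Fin 3)
      simp only [Pi.add_apply, star3_0, s00, s02] at t
      linear_combination t
    have q1 : d (Pi.single 1 1) 1 = 2 * d (Pi.single 0 1) 0 := by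
      have t := congrFun H3 (1 : Fin 3)
      simp only [Pi.add_apply, star3_1, s00, s01, s02] at t
      linear_combination t
    have q2 : d (Pi.single 1 1) 2 = 0 := by
      have t := congrFun H3 (2 : Fin 3)
      simp only [Pi.add_apply, star3_2, s02] at t
      linear_combination t
    refine ⟨d (Pi.single 0 1) 0, d (Pi.single 0 1) 1, ?_, ?_, ?_⟩
    · funext j
      fin_cases j <;> simp [r0, r1, r2]
    · funext j
      fin_cases j <;>
        simp [Pi.add_apply, Pi.smul_apply, s00, s01, s02, s10, s11, s12, p2]
    · funext j
      fin_cases j <;>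
        simp [Pi.smul_apply, s10, s11, s12, q0, q1, q2, p2]
  · rintro ⟨a, b, h2, h0, h1⟩
    have hrep : ∀ x : Fin 3 → ℂ,
        x = x 0 • (Pi.single 0 1 : Fin 3 → ℂ) + x 1 • (Pi.single 1 1 : Fin 3 → ℂ)
          + x 2 • (Pi.single 2 1 : Fin 3 → ℂ) := by
      intro x; funext i
      fin_cases i <;>
        simp [s00, s01, s02, s10, s11, s12, s20, s21, s22]
    have hd : ∀ x : Fin 3 → ℂ,
        d x = x 0 • d (Pi.single 0 1) + x 1 • d (Pi.single 1 1)
          + x 2 • d (Pi.single 2 1) := by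
      intro x
      conv_lhs => rw [hrep x]
      simp
    refine ⟨fun x y => ?_, fun x y => ?_⟩
    · rw [hd (bul3 x y), hd x, hd y, h0, h1, h2]
      apply vec_ext <;>
        · simp only [Pi.add_apply, Pi.smul_apply, Pi.zero_apply, bul3_0, bul3_1, bul3_2,
            s00, s01, s02, s10, s11, s12, s20, s21, s22, smul_eq_mul, mul_zero, smul_zero,
            mul_one, add_zero, zero_add]
          ring
    · rw [hd (star3 x y), hd x, hd y, h0, h1, h2]
      apply vec_ext <;>
        · simp only [Pi.add_apply, Pi.smul_apply, Pi.zero_apply, star3_0, star3_1, star3_2,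
            s00, s01, s02, s10, s11, s12, s20, s21, s22, smul_eq_mul, mul_zero, smul_zero,
            mul_one, add_zero, zero_add]
          ring
end

section
/- For the 4-dimensional compatible associative algebra with products • and * given by e₁•e₁ = e₁, e₁•eᵢ = eᵢ and eᵢ•e₁ = eᵢ for i = 2,3,4 (all other • products zero), and e₁*e₁ = e₁, e₁*eᵢ = eᵢ = eᵢ*e₁ for i = 2,3,4, e₂*e₂ = e₄ (all other * products zero), a linear map d is a derivation of the compatible pair if and only if d(e₁) = 0, d(e₂) = a·e₂ + b·e₃ + c·e₄, d(e₃) = p·e₃ + q·e₄, d(e₄) = 2a·e₄ for some a,b,c,p,q ∈ ℂ. -/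
/-- `e₁•e₁ = e₁`, `e₁•eᵢ = eᵢ`, `eᵢ•e₁ = eᵢ` for `i = 2,3,4`. -/
def bul4 (x y : Fin 4 → ℂ) : Fin 4 → ℂ :=
  ![x 0 * y 0, x 0 * y 1 + x 1 * y 0, x 0 * y 2 + x 2 * y 0, x 0 * y 3 + x 3 * y 0]

/-- Same as `bul4` together with `e₂*e₂ = e₄`. -/
def star4 (x y : Fin 4 → ℂ) : Fin 4 → ℂ :=
  ![x 0 * y 0, x 0 * y 1 + x 1 * y 0, x 0 * y 2 + x 2 * y 0,
    x 0 * y 3 + x 3 * y 0 + x 1 * y 1]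

/-- Derivations of this 4-dimensional compatible pair; in particular every
derivation kills `e₁`. -/
theorem der_unital_pair (d : (Fin 4 → ℂ) →ₗ[ℂ] (Fin 4 → ℂ)) :
    ((∀ a b : Fin 4 → ℂ, d (bul4 a b) = bul4 (d a) b + bul4 a (d b)) ∧
     (∀ a b : Fin 4 → ℂ, d (star4 a b) = star4 (d a) b + star4 a (d b))) ↔
    ∃ a b c p q : ℂ,
      d (Pi.single 0 1 : Fin 4 → ℂ) = 0 ∧
      d (Pi.single 1 1 : Fin 4 → ℂ)
        = a • (Pi.single 1 1 : Fin 4 → ℂ) + b • (Pi.single 2 1 : Fin 4 → ℂ)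
            + c • (Pi.single 3 1 : Fin 4 → ℂ) ∧
      d (Pi.single 2 1 : Fin 4 → ℂ)
        = p • (Pi.single 2 1 : Fin 4 → ℂ) + q • (Pi.single 3 1 : Fin 4 → ℂ) ∧
      d (Pi.single 3 1 : Fin 4 → ℂ) = (2 * a) • (Pi.single 3 1 : Fin 4 → ℂ) := by
  have hexp : ∀ x : Fin 4 → ℂ, d x =
      x 0 • d (Pi.single 0 1) + x 1 • d (Pi.single 1 1)
      + x 2 • d (Pi.single 2 1) + x 3 • d (Pi.single 3 1) := by
    intro x
    have hx : x = x 0 • (Pi.single 0 1 : Fin 4 → ℂ)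
        + x 1 • (Pi.single 1 1 : Fin 4 → ℂ)
        + x 2 • (Pi.single 2 1 : Fin 4 → ℂ)
        + x 3 • (Pi.single 3 1 : Fin 4 → ℂ) := by
      funext i; fin_cases i <;> simp [Pi.single_apply]
    conv_lhs => rw [hx]
    simp
  constructor
  · rintro ⟨hb, hs⟩
    have p00 : bul4 (Pi.single 0 1) (Pi.single 0 1) = (Pi.single 0 1 : Fin 4 → ℂ) := by
      funext i; fin_cases i <;> simp [bul4, Pi.single_apply]
    have p11 : bul4 (Pi.single 1 1) (Pi.single 1 1) = (0 : Fin 4 → ℂ) := by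
      funext i; fin_cases i <;> simp [bul4, Pi.single_apply]
    have p22 : bul4 (Pi.single 2 1) (Pi.single 2 1) = (0 : Fin 4 → ℂ) := by
      funext i; fin_cases i <;> simp [bul4, Pi.single_apply]
    have p11s : star4 (Pi.single 1 1) (Pi.single 1 1) = (Pi.single 3 1 : Fin 4 → ℂ) := by
      funext i; fin_cases i <;> simp [star4, Pi.single_apply]
    have p12s : star4 (Pi.single 1 1) (Pi.single 2 1) = (0 : Fin 4 → ℂ) := by
      funext i; fin_cases i <;> simp [star4, Pi.single_apply]
    have h00 := hb (Pi.single 0 1) (Pi.single 0 1); rw [p00] at h00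
    have h11b := hb (Pi.single 1 1) (Pi.single 1 1); rw [p11] at h11b
    have h22b := hb (Pi.single 2 1) (Pi.single 2 1); rw [p22] at h22b
    have h11s := hs (Pi.single 1 1) (Pi.single 1 1); rw [p11s] at h11s
    have h12s := hs (Pi.single 1 1) (Pi.single 2 1); rw [p12s] at h12s
    -- d e0 = 0
    have hd0 : d (Pi.single 0 1 : Fin 4 → ℂ) = 0 := by
      funext i
      have h := congrFun h00 i
      fin_cases i <;> simp [bul4, Pi.single_apply] at h ⊢ <;> simp [h]
    -- first-row entries
    have z10 : d (Pi.single 1 1 : Fin 4 → ℂ) 0 = 0 := by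
      have h := congrFun h11b 1
      simp [bul4, Pi.single_apply] at h
      linear_combination -h / 2
    have z20 : d (Pi.single 2 1 : Fin 4 → ℂ) 0 = 0 := by
      have h := congrFun h22b 2
      simp [bul4, Pi.single_apply] at h
      linear_combination -h / 2
    have z21 : d (Pi.single 2 1 : Fin 4 → ℂ) 1 = 0 := by
      have h := congrFun h12s 3
      simp [star4, Pi.single_apply] at h
      linear_combination -h
    refine ⟨d (Pi.single 1 1) 1, d (Pi.single 1 1) 2, d (Pi.single 1 1) 3,
      d (Pi.single 2 1) 2, d (Pi.single 2 1) 3, hd0, ?_, ?_, ?_⟩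
    · funext i
      fin_cases i <;> simp [Pi.single_apply] <;> try exact z10
    · funext i
      fin_cases i <;> simp [Pi.single_apply] <;> first | exact z20 | exact z21
    · funext i
      have h := congrFun h11s i
      fin_cases i <;> simp [star4, Pi.single_apply, z10] at h ⊢ <;>
        linear_combination h
  · rintro ⟨a, b, c, p, q, h0, h1, h2, h3⟩
    have hdx : ∀ (x : Fin 4 → ℂ) (i : Fin 4), d x i =
        ![(0:ℂ), a * x 1, b * x 1 + p * x 2, c * x 1 + q * x 2 + 2*a*x 3] i := by
      intro x i
      rw [hexp x]
      fin_cases i <;> simp [h0, h1, h2, h3, Pi.single_apply] <;> ring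
    constructor <;> intro x y <;> funext i <;>
      simp only [bul4, star4, Pi.add_apply, hdx] <;> fin_cases i <;>
      simp [Matrix.cons_val_zero, Matrix.cons_val_one, Matrix.head_cons] <;> ring
end
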